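/- Let a, b, c, d be real numbers with a < b and c < d. Then there exists no orientation-preserving bijection from the open interval (a, b) onto the closed interval [c, d] (with respect to the usual order on the real numbers). -/
import Mathlib


variable {X : Type*}

/-- The partial transformation `f` is order-preserving on the subset `A` of its domain. -/
def IsOrdOn [LinearOrder X] (f : X →. X) (A : Set X) : Prop :=
  ∀ ⦃x y u v : X⦄, x ∈ A → y ∈ A → x ≤ y → u ∈ f x → v ∈ f y → u ≤ v

/-- `Y` is an ideal of the partial transformation `f`: a nonempty subset of the domain such
that `f` is order-preserving on `Y` and on `Dom f \ Y`, and every element of `Y` is below every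
element of `Dom f \ Y` while its image is above. -/
def IsIdeal [LinearOrder X] (f : X →. X) (Y : Set X) : Prop :=
  Y.Nonempty ∧ Y ⊆ f.Dom ∧ IsOrdOn f Y ∧ IsOrdOn f (f.Dom \ Y) ∧
    ∀ ⦃a b u v : X⦄, a ∈ Y → b ∈ f.Dom \ Y → u ∈ f a → v ∈ f b → a ≤ b ∧ v ≤ u

/-- `f` is an orientation-preserving partial transformation: it is the empty transformation
or it admits an ideal. -/
def IsOP [LinearOrder X] (f : X →. X) : Prop :=
  f.Dom = ∅ ∨ ∃ Y : Set X, IsIdeal f Y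

/-- There is no orientation-preserving bijection from an open interval `(a, b)` (with
`a < b`) onto a closed interval `[c, d]` (with `c < d`) of the real numbers. -/
theorem stmt19 (a b c d : ℝ) (hab : a < b) (hcd : c < d) :
    ¬ ∃ θ : ℝ →. ℝ, θ.Dom = Set.Ioo a b ∧
        (∀ ⦃x y u : ℝ⦄, u ∈ θ x → u ∈ θ y → x = y) ∧
        θ.ran = Set.Icc c d ∧ IsOP θ := by
  rintro ⟨θ, hdom, hinj, hran, hop⟩
  -- every value lies in [c, d]
  have hval : ∀ ⦃x u : ℝ⦄, u ∈ θ x → c ≤ u ∧ u ≤ d := by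
    intro x u hu
    have : u ∈ θ.ran := ⟨x, hu⟩
    rw [hran] at this
    exact this
  -- every element of the domain lies in (a, b)
  have hdm : ∀ ⦃x u : ℝ⦄, u ∈ θ x → a < x ∧ x < b := by
    intro x u hu
    have : x ∈ θ.Dom := PFun.mem_dom θ x |>.2 ⟨u, hu⟩
    rw [hdom] at this
    exact this
  -- preimages of d and c
  have hd : d ∈ θ.ran := by rw [hran]; exact ⟨le_of_lt hcd, le_refl d⟩
  obtain ⟨xd, hxd⟩ := hd
  have hc : c ∈ θ.ran := by rw [hran]; exact ⟨le_refl c, le_of_lt hcd⟩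
  obtain ⟨xc, hxc⟩ := hc
  rcases hop with hop | ⟨Y, hne, hYdom, hordY, hordC, hsep⟩
  · have : xd ∈ θ.Dom := PFun.mem_dom θ xd |>.2 ⟨d, hxd⟩
    rw [hop] at this
    exact this
  rcases Set.eq_empty_or_nonempty (θ.Dom \ Y) with hC | ⟨z, hz⟩
  · -- complement empty: θ.Dom ⊆ Y, so θ is order-preserving everywhere
    have hsub : θ.Dom ⊆ Y := fun x hx => by
      by_contra h
      exact (Set.eq_empty_iff_forall_notMem.1 hC x) ⟨hx, h⟩
    have hxdY : xd ∈ Y := hsub (PFun.mem_dom θ xd |>.2 ⟨d, hxd⟩)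
    set m := (xd + b) / 2 with hm
    have hxdb : xd < b := (hdm hxd).2
    have hm1 : xd < m := by simp [hm]; linarith
    have hm2 : m < b := by simp [hm]; linarith
    have hmdom : m ∈ θ.Dom := by rw [hdom]; exact ⟨lt_trans (hdm hxd).1 hm1, hm2⟩
    obtain ⟨v, hv⟩ := (PFun.mem_dom θ m).1 hmdom
    have hmY : m ∈ Y := hsub hmdom
    have h1 : d ≤ v := hordY hxdY hmY (le_of_lt hm1) hxd hv
    have h2 : v = d := le_antisymm (hval hv).2 h1
    have : xd = m := hinj hxd (h2 ▸ hv)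
    linarith
  · -- complement nonempty
    obtain ⟨w, hw⟩ := (PFun.mem_dom θ z).1 hz.1
    -- xd ∈ Y
    have hxdY : xd ∈ Y := by
      by_contra h
      have hxdC : xd ∈ θ.Dom \ Y := ⟨PFun.mem_dom θ xd |>.2 ⟨d, hxd⟩, h⟩
      obtain ⟨y, hy⟩ := hne
      obtain ⟨v, hv⟩ := (PFun.mem_dom θ y).1 (hYdom hy)
      have := hsep hy hxdC hv hxd
      have hvd : v = d := le_antisymm (hval hv).2 this.2
      exact h (hinj hxd (hvd ▸ hv) ▸ hy)
    -- xc ∈ Dom \ Y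
    have hxcC : xc ∈ θ.Dom \ Y := by
      constructor
      · exact PFun.mem_dom θ xc |>.2 ⟨c, hxc⟩
      · intro hxcY
        have := hsep hxcY hz hxc hw
        have hwc : w = c := le_antisymm this.2 (hval hw).1
        exact hz.2 (hinj hxc (hwc ▸ hw) ▸ hxcY)
    have hle : xd ≤ xc := (hsep hxdY hxcC hxd hxc).1
    have hne' : xd ≠ xc := fun h => hxcC.2 (h ▸ hxdY)
    have hlt : xd < xc := lt_of_le_of_ne hle hne'
    set m := (xd + xc) / 2 with hm
    have hm1 : xd < m := by simp [hm]; linarith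
    have hm2 : m < xc := by simp [hm]; linarith
    have hmdom : m ∈ θ.Dom := by
      rw [hdom]
      exact ⟨lt_trans (hdm hxd).1 hm1, lt_trans hm2 (hdm hxc).2⟩
    obtain ⟨v, hv⟩ := (PFun.mem_dom θ m).1 hmdom
    by_cases hmY : m ∈ Y
    · have h1 : d ≤ v := hordY hxdY hmY (le_of_lt hm1) hxd hv
      have h2 : v = d := le_antisymm (hval hv).2 h1
      have : xd = m := hinj hxd (h2 ▸ hv)
      linarith
    · have hmC : m ∈ θ.Dom \ Y := ⟨hmdom, hmY⟩
      have h1 : v ≤ c := hordC hmC hxcC (le_of_lt hm2) hv hxc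
      have h2 : v = c := le_antisymm h1 (hval hv).1
      have : xc = m := hinj hxc (h2 ▸ hv)
      linarith
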